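/- Let a, b ∈ A with a ≠ b, and for N ≥ 1 let p_N = Σ_{i=1}^N b^i.(a.0), where b^i.t denotes t prefixed by i copies of b. Then for every N ≥ 1, a.0 ‖ p_N ∼_B a.p_N + Σ_{i=1}^N b.(a.0 ‖ b^{i-1}.(a.0)); in particular, the closed equation e_N: a.0 ‖ p_N ≈ a.p_N + Σ_{i=1}^N b.(a.0 ‖ b^{i-1}.(a.0)) is sound modulo possible futures equivalence ∼_PF. -/
import Mathlib


/-- Actions: names, co-names and the silent action τ. -/
inductive Act (A : Type) : Type
  | name : A → Act A
  | coname : A → Act A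
  | tau : Act A
  deriving DecidableEq

/-- Complementation of actions (`co` of τ is τ; it is only ever used on non-τ actions). -/
def Act.co {A : Type} : Act A → Act A
  | .name a => .coname a
  | .coname a => .name a
  | .tau => .tau

/-- CCS terms: 0, variables, prefixing, choice and parallel composition. -/
inductive Tm (A : Type) : Type
  | nil : Tm A
  | var : ℕ → Tm A
  | pre : Act A → Tm A → Tm A
  | plus : Tm A → Tm A → Tm A
  | par : Tm A → Tm A → Tm A

/-- The SOS transition relation of CCS. -/
inductive Step {A : Type} : Tm A → Act A → Tm A → Prop
  | pre (μ : Act A) (t : Tm A) : Step (.pre μ t) μ t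
  | plusL {t u t' : Tm A} {μ : Act A} : Step t μ t' → Step (.plus t u) μ t'
  | plusR {t u u' : Tm A} {μ : Act A} : Step u μ u' → Step (.plus t u) μ u'
  | parL {t u t' : Tm A} {μ : Act A} : Step t μ t' → Step (.par t u) μ (.par t' u)
  | parR {t u u' : Tm A} {μ : Act A} : Step u μ u' → Step (.par t u) μ (.par t u')
  | comm {t u t' u' : Tm A} {α : Act A} : α ≠ Act.tau → Step t α t' → Step u α.co u' →
      Step (.par t u) .tau (.par t' u')

/-- A term is closed (a process) if no variable occurs in it. -/
def Closed {A : Type} : Tm A → Prop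
  | .nil => True
  | .var _ => False
  | .pre _ t => Closed t
  | .plus t u => Closed t ∧ Closed u
  | .par t u => Closed t ∧ Closed u

/-- Applying a substitution to a term. -/
def subst {A : Type} (σ : ℕ → Tm A) : Tm A → Tm A
  | .nil => .nil
  | .var x => σ x
  | .pre μ t => .pre μ (subst σ t)
  | .plus t u => .plus (subst σ t) (subst σ u)
  | .par t u => .par (subst σ t) (subst σ u)

/-- A substitution is closed if all its values are closed. -/
def ClosedSubst {A : Type} (σ : ℕ → Tm A) : Prop := ∀ x, Closed (σ x)

/-- `R` is a bisimulation (symmetric, with the transfer property). -/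
def IsBisim {A : Type} (R : Tm A → Tm A → Prop) : Prop :=
  (∀ p q, R p q → R q p) ∧
  (∀ p q μ p', R p q → Step p μ p' → ∃ q', Step q μ q' ∧ R p' q')

/-- Bisimilarity: the largest bisimulation. -/
def Bisim {A : Type} (p q : Tm A) : Prop := ∃ R, IsBisim R ∧ R p q

/-- Equations are pairs of terms. -/
abbrev Eqn (A : Type) := Tm A × Tm A

/-- Derivability in equational logic from the axiom system `E`. -/
inductive Deriv {A : Type} (E : Set (Eqn A)) : Tm A → Tm A → Prop
  | ax {t u : Tm A} (σ : ℕ → Tm A) (h : (t, u) ∈ E) : Deriv E (subst σ t) (subst σ u)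
  | refl (t : Tm A) : Deriv E t t
  | symm {t u : Tm A} (h : Deriv E t u) : Deriv E u t
  | trans {t u v : Tm A} (h₁ : Deriv E t u) (h₂ : Deriv E u v) : Deriv E t v
  | pre (μ : Act A) {t u : Tm A} (h : Deriv E t u) : Deriv E (.pre μ t) (.pre μ u)
  | plus {t u t' u' : Tm A} (h₁ : Deriv E t u) (h₂ : Deriv E t' u') :
      Deriv E (.plus t t') (.plus u u')
  | par {t u t' u' : Tm A} (h₁ : Deriv E t u) (h₂ : Deriv E t' u') :
      Deriv E (.par t t') (.par u u')

/-- An equation is sound modulo `sim` if all its closed instances are related by `sim`. -/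
def EqnSound {A : Type} (sim : Tm A → Tm A → Prop) (t u : Tm A) : Prop :=
  ∀ σ : ℕ → Tm A, ClosedSubst σ → sim (subst σ t) (subst σ u)

/-- An axiom system is sound modulo `sim` if each of its equations is. -/
def SystemSound {A : Type} (sim : Tm A → Tm A → Prop) (E : Set (Eqn A)) : Prop :=
  ∀ e ∈ E, EqnSound sim e.1 e.2

/-- An axiom system is ground-complete modulo `sim` if it derives every valid
closed equation. -/
def GroundComplete {A : Type} (sim : Tm A → Tm A → Prop) (E : Set (Eqn A)) : Prop :=
  ∀ p q : Tm A, Closed p → Closed q → sim p q → Deriv E p q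

/-- `sumF g n` is the sum `g 1 + ⋯ + g n` (empty sum being 0, no padding for `n = 1`). -/
def sumF {A : Type} (g : ℕ → Tm A) : ℕ → Tm A
  | 0 => .nil
  | 1 => g 1
  | n + 2 => .plus (sumF g (n + 1)) (g (n + 2))

/-- Multi-step transitions along a sequence of actions. -/
inductive MStep {A : Type} : Tm A → List (Act A) → Tm A → Prop
  | refl (p : Tm A) : MStep p [] p
  | step {p p' q : Tm A} {μ : Act A} {φ : List (Act A)} :
      Step p μ p' → MStep p' φ q → MStep p (μ :: φ) q

/-- `φ` is a trace of `p`. -/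
def HasTrace {A : Type} (p : Tm A) (φ : List (Act A)) : Prop := ∃ p', MStep p φ p'

/-- Trace equivalence. -/
def TEq {A : Type} (p q : Tm A) : Prop := ∀ φ, HasTrace p φ ↔ HasTrace q φ

/-- The set of traces of `p`. -/
def tracesOf {A : Type} (p : Tm A) : Set (List (Act A)) := { φ | ∃ p', MStep p φ p' }

/-- The set of possible futures of `p`: pairs `(φ, X)` with `p →^φ p'` and `X` the set
of traces of `p'`. -/
def possibleFutures {A : Type} (p : Tm A) : Set (List (Act A) × Set (List (Act A))) :=
  { c | ∃ p', MStep p c.1 p' ∧ c.2 = tracesOf p' }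

/-- Possible futures equivalence. -/
def PFEq {A : Type} (p q : Tm A) : Prop := possibleFutures p = possibleFutures q

/-- `npre μ i t` prefixes `t` with `i` copies of `μ`. -/
def npre {A : Type} (μ : Act A) : ℕ → Tm A → Tm A
  | 0, t => t
  | i + 1, t => .pre μ (npre μ i t)

/-- `pN a b N = Σ_{i=1}^N b^i.(a.0)`. -/
def pN {A : Type} (a b : A) (N : ℕ) : Tm A :=
  sumF (fun i => npre (.name b) i (.pre (.name a) .nil)) N


section Aux
variable {A : Type}

lemma closed_subst (σ : ℕ → Tm A) : ∀ t : Tm A, Closed t → subst σ t = t := by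
  intro t ht
  induction t with
  | nil => rfl
  | var x => exact ht.elim
  | pre μ t ih => simp only [subst]; rw [ih ht]
  | plus t u iht ihu => simp only [subst]; rw [iht ht.1, ihu ht.2]
  | par t u iht ihu => simp only [subst]; rw [iht ht.1, ihu ht.2]

lemma closed_npre (μ : Act A) : ∀ (i : ℕ) {t : Tm A}, Closed t → Closed (npre μ i t)
  | 0, _, h => h
  | i + 1, _, h => closed_npre μ i h

lemma closed_sumF {g : ℕ → Tm A} (hg : ∀ i, Closed (g i)) : ∀ n, Closed (sumF g n)
  | 0 => trivial
  | 1 => hg 1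
  | n + 2 => ⟨closed_sumF hg (n + 1), hg (n + 2)⟩

lemma mstep_transfer {R : Tm A → Tm A → Prop} (hR : IsBisim R) :
    ∀ {p φ p'}, MStep p φ p' → ∀ q, R p q → ∃ q', MStep q φ q' ∧ R p' q' := by
  intro p φ p' h
  induction h with
  | refl p => exact fun q hq => ⟨q, MStep.refl q, hq⟩
  | step hs hm ih =>
    intro q hq
    obtain ⟨q1, hq1, hr1⟩ := hR.2 _ _ _ _ hq hs
    obtain ⟨q', hq', hr'⟩ := ih q1 hr1
    exact ⟨q', MStep.step hq1 hq', hr'⟩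

lemma traces_eq {R : Tm A → Tm A → Prop} (hR : IsBisim R) {p q} (h : R p q) :
    tracesOf p = tracesOf q := by
  ext φ
  constructor
  · rintro ⟨p', hp'⟩
    obtain ⟨q', hq', _⟩ := mstep_transfer hR hp' q h
    exact ⟨q', hq'⟩
  · rintro ⟨q', hq'⟩
    obtain ⟨p', hp', _⟩ := mstep_transfer hR hq' p (hR.1 _ _ h)
    exact ⟨p', hp'⟩

lemma bisim_pfeq {p q : Tm A} (h : Bisim p q) : PFEq p q := by
  obtain ⟨R, hR, hpq⟩ := h
  have key : ∀ p q, R p q → possibleFutures p ⊆ possibleFutures q := by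
    rintro p q hpq c ⟨p', hp', hX⟩
    obtain ⟨q', hq', hr'⟩ := mstep_transfer hR hp' q hpq
    exact ⟨q', hq', hX.trans (traces_eq hR hr')⟩
  exact Set.Subset.antisymm (key _ _ hpq) (key _ _ (hR.1 _ _ hpq))

lemma step_sumF_elim {g : ℕ → Tm A} :
    ∀ (n : ℕ) {μ p'}, Step (sumF g n) μ p' → ∃ i, 1 ≤ i ∧ i ≤ n ∧ Step (g i) μ p'
  | 0, μ, p', h => by simp only [sumF] at h; cases h
  | 1, μ, p', h => ⟨1, le_refl 1, le_refl 1, h⟩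
  | n + 2, μ, p', h => by
    simp only [sumF] at h
    cases h with
    | plusL h =>
      obtain ⟨i, h1, h2, hs⟩ := step_sumF_elim (n + 1) h
      exact ⟨i, h1, h2.trans (by omega), hs⟩
    | plusR h => exact ⟨n + 2, by omega, le_refl _, h⟩

lemma step_sumF_intro {g : ℕ → Tm A} :
    ∀ (n : ℕ) {i μ p'}, 1 ≤ i → i ≤ n → Step (g i) μ p' → Step (sumF g n) μ p'
  | 0, i, μ, p', h1, h2, _ => absurd (h1.trans h2) (by omega)
  | 1, i, μ, p', h1, h2, hs => by
    have : i = 1 := by omega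
    subst this; exact hs
  | n + 2, i, μ, p', h1, h2, hs => by
    simp only [sumF]
    rcases Nat.lt_or_ge i (n + 2) with h | h
    · exact Step.plusL (step_sumF_intro (n + 1) h1 (by omega) hs)
    · have : i = n + 2 := by omega
      subst this; exact Step.plusR hs

lemma npre_eq {μ : Act A} : ∀ {i : ℕ}, 1 ≤ i → ∀ t : Tm A,
    npre μ i t = .pre μ (npre μ (i - 1) t)
  | 0, h, _ => absurd h (by omega)
  | i + 1, _, t => rfl

/-- Steps of `pN`. -/
lemma step_pN_elim {a b : A} {N : ℕ} {μ : Act A} {p' : Tm A}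
    (h : Step (pN a b N) μ p') :
    μ = .name b ∧ ∃ i, 1 ≤ i ∧ i ≤ N ∧ p' = npre (.name b) (i - 1) (.pre (.name a) .nil) := by
  obtain ⟨i, h1, h2, hs⟩ := step_sumF_elim N h
  rw [npre_eq h1] at hs
  cases hs
  exact ⟨rfl, i, h1, h2, rfl⟩

lemma step_pN_intro {a b : A} {N : ℕ} {i : ℕ} (h1 : 1 ≤ i) (h2 : i ≤ N) :
    Step (pN a b N) (.name b) (npre (.name b) (i - 1) (.pre (.name a) .nil)) := by
  refine step_sumF_intro N h1 h2 ?_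
  rw [npre_eq h1]
  exact Step.pre _ _

end Aux

section Main
variable {A : Type} (a b : A) (N : ℕ)

/-- Abbreviations for the two sides. -/
def lhsT (a b : A) (N : ℕ) : Tm A := .par (.pre (.name a) .nil) (pN a b N)

def rhsT (a b : A) (N : ℕ) : Tm A :=
  .plus (.pre (.name a) (pN a b N))
    (sumF (fun i =>
      .pre (.name b) (.par (.pre (.name a) .nil)
        (npre (.name b) (i - 1) (.pre (.name a) .nil)))) N)

/-- The bisimulation relation. -/
def Rrel (a b : A) (N : ℕ) (p q : Tm A) : Prop :=
  (p = lhsT a b N ∧ q = rhsT a b N) ∨ (p = rhsT a b N ∧ q = lhsT a b N) ∨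
  (∃ t, p = .par .nil t ∧ q = t) ∨ (∃ t, q = .par .nil t ∧ p = t) ∨ p = q

lemma Rrel_symm (p q : Tm A) (h : Rrel a b N p q) : Rrel a b N q p := by
  rcases h with ⟨h1, h2⟩ | ⟨h1, h2⟩ | ⟨t, h1, h2⟩ | ⟨t, h1, h2⟩ | h
  · exact Or.inr (Or.inl ⟨h2, h1⟩)
  · exact Or.inl ⟨h2, h1⟩
  · exact Or.inr (Or.inr (Or.inr (Or.inl ⟨t, h1, h2⟩)))
  · exact Or.inr (Or.inr (Or.inl ⟨t, h1, h2⟩))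
  · exact Or.inr (Or.inr (Or.inr (Or.inr h.symm)))

lemma Rrel_transfer (p q : Tm A) (μ : Act A) (p' : Tm A)
    (hR : Rrel a b N p q) (hs : Step p μ p') :
    ∃ q', Step q μ q' ∧ Rrel a b N p' q' := by
  rcases hR with ⟨h1, h2⟩ | ⟨h1, h2⟩ | ⟨t, h1, h2⟩ | ⟨t, h1, h2⟩ | h
  · -- p = lhs, q = rhs
    subst h1; subst h2
    cases hs with
    | parL h =>
      cases h
      exact ⟨pN a b N, Step.plusL (Step.pre _ _),
        Or.inr (Or.inr (Or.inl ⟨pN a b N, rfl, rfl⟩))⟩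
    | parR h =>
      obtain ⟨hμ, i, h1, h2, hp'⟩ := step_pN_elim h
      subst hμ; subst hp'
      refine ⟨_, Step.plusR (step_sumF_intro N h1 h2 (Step.pre _ _)), ?_⟩
      exact Or.inr (Or.inr (Or.inr (Or.inr rfl)))
    | comm hτ h1 h2 =>
      cases h1
      obtain ⟨hμ, _⟩ := step_pN_elim h2
      simp [Act.co] at hμ
  · -- p = rhs, q = lhs
    subst h1; subst h2
    cases hs with
    | plusL h =>
      cases h
      refine ⟨.par .nil (pN a b N), Step.parL (Step.pre _ _), ?_⟩
      exact Or.inr (Or.inr (Or.inr (Or.inl ⟨pN a b N, rfl, rfl⟩)))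
    | plusR h =>
      obtain ⟨i, h1, h2, hs'⟩ := step_sumF_elim N h
      cases hs'
      refine ⟨_, Step.parR (step_pN_intro h1 h2), ?_⟩
      exact Or.inr (Or.inr (Or.inr (Or.inr rfl)))
  · -- p = par nil t, q = t
    subst h1; subst h2
    cases hs with
    | parL h => cases h
    | parR h => exact ⟨_, h, Or.inr (Or.inr (Or.inl ⟨_, rfl, rfl⟩))⟩
    | comm hτ h1 h2 => cases h1
  · -- q = par nil t, p = t
    subst h1; subst h2
    exact ⟨.par .nil p', Step.parR hs, Or.inr (Or.inr (Or.inr (Or.inl ⟨p', rfl, rfl⟩)))⟩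
  · subst h
    exact ⟨p', hs, Or.inr (Or.inr (Or.inr (Or.inr rfl)))⟩

lemma main_bisim : Bisim (lhsT a b N) (rhsT a b N) :=
  ⟨Rrel a b N, ⟨Rrel_symm a b N, Rrel_transfer a b N⟩, Or.inl ⟨rfl, rfl⟩⟩

lemma closed_a0 : Closed (Tm.pre (Act.name a) (Tm.nil : Tm A)) := trivial

lemma closed_lhs : Closed (lhsT a b N) :=
  ⟨closed_a0 a, closed_sumF (fun i => closed_npre _ i (closed_a0 a)) N⟩

lemma closed_rhs : Closed (rhsT a b N) :=
  ⟨closed_sumF (fun i => closed_npre _ i (closed_a0 a)) N,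
   closed_sumF
     (g := fun i => Tm.pre (Act.name b) (Tm.par (.pre (.name a) .nil)
        (npre (.name b) (i - 1) (.pre (.name a) .nil))))
     (fun i => (⟨closed_a0 a, closed_npre _ (i - 1) (closed_a0 a)⟩ :
       Closed (Tm.par (.pre (.name a) .nil) (npre (.name b) (i - 1) (.pre (.name a) .nil))))) N⟩

end Main

/-- **Soundness of the equations `e_N`**: for distinct `a, b ∈ A` and `N ≥ 1`,
`a.0 ‖ p_N ∼_B a.p_N + Σ_{i=1}^N b.(a.0 ‖ b^{i-1}.(a.0))`; in particular, the closed
equation `e_N` is sound modulo possible futures equivalence. -/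
theorem stmt_12 (A : Type) (a b : A) (hab : a ≠ b) (N : ℕ) (hN : 1 ≤ N) :
    Bisim (.par (.pre (.name a) .nil) (pN a b N))
      (.plus (.pre (.name a) (pN a b N))
        (sumF (fun i =>
          .pre (.name b) (.par (.pre (.name a) .nil)
            (npre (.name b) (i - 1) (.pre (.name a) .nil)))) N)) ∧
    EqnSound PFEq (.par (.pre (.name a) .nil) (pN a b N))
      (.plus (.pre (.name a) (pN a b N))
        (sumF (fun i =>
          .pre (.name b) (.par (.pre (.name a) .nil)
            (npre (.name b) (i - 1) (.pre (.name a) .nil)))) N)) := by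
  constructor
  · exact main_bisim a b N
  · intro σ hσ
    show PFEq (subst σ (lhsT a b N)) (subst σ (rhsT a b N))
    rw [closed_subst σ _ (closed_lhs a b N), closed_subst σ _ (closed_rhs a b N)]
    exact bisim_pfeq (main_bisim a b N)
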